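/- arXiv:1005.4769 — 2 statements merged into one kernel-verified Lean document; each statement's English description precedes it below -/
import Mathlib

section
/- For any link success probabilities (a_A, a_B, a_CD, a_E, a_F) ∈ (0,1]^5, the quantities γᵐ_D, γʳ_A + γʳ_B − γʳ_C, and γᵐ_E + γᵐ_F − γᵐ_D are all strictly positive, and a_CD · γᵐ_D · (γʳ_A + γʳ_B − γʳ_C) · (γᵐ_E + γᵐ_F − γᵐ_D) = γʳ_A · γʳ_B · γᵐ_E · γᵐ_F. (This is the exact inversion underlying the maximum-likelihood estimate α̂_CD = γʳ_A γʳ_B γᵐ_E γᵐ_F / [γᵐ_D (γʳ_A+γʳ_B−γʳ_C)(γᵐ_E+γᵐ_F−γᵐ_D)] of the middle-link success rate.) -/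
/-- Probabilities of the nine informative observations in the network-coded
five-link tree (sources A, B; middle link CD; receivers E, F). -/
noncomputable def p1 (aA aB aCD aE aF : ℝ) : ℝ := aA * (1 - aB) * aCD * aE * (1 - aF)
noncomputable def p2 (aA aB aCD aE aF : ℝ) : ℝ := (1 - aA) * aB * aCD * aE * (1 - aF)
noncomputable def p3 (aA aB aCD aE aF : ℝ) : ℝ := aA * aB * aCD * aE * (1 - aF)
noncomputable def p4 (aA aB aCD aE aF : ℝ) : ℝ := aA * (1 - aB) * aCD * (1 - aE) * aF
noncomputable def p5 (aA aB aCD aE aF : ℝ) : ℝ := (1 - aA) * aB * aCD * (1 - aE) * aF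
noncomputable def p6 (aA aB aCD aE aF : ℝ) : ℝ := aA * aB * aCD * (1 - aE) * aF
noncomputable def p7 (aA aB aCD aE aF : ℝ) : ℝ := aA * (1 - aB) * aCD * aE * aF
noncomputable def p8 (aA aB aCD aE aF : ℝ) : ℝ := (1 - aA) * aB * aCD * aE * aF
noncomputable def p9 (aA aB aCD aE aF : ℝ) : ℝ := aA * aB * aCD * aE * aF

/-- γʳ_A : probability that at least one received probe contains `x₁`. -/
noncomputable def gammaRA (aA aB aCD aE aF : ℝ) : ℝ :=
  p1 aA aB aCD aE aF + p3 aA aB aCD aE aF + p4 aA aB aCD aE aF +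
    p6 aA aB aCD aE aF + p7 aA aB aCD aE aF + p9 aA aB aCD aE aF

/-- γʳ_B : probability that at least one received probe contains `x₂`. -/
noncomputable def gammaRB (aA aB aCD aE aF : ℝ) : ℝ :=
  p2 aA aB aCD aE aF + p3 aA aB aCD aE aF + p5 aA aB aCD aE aF +
    p6 aA aB aCD aE aF + p8 aA aB aCD aE aF + p9 aA aB aCD aE aF

/-- γʳ_C = γᵐ_D : probability that something is received. -/
noncomputable def gammaRC (aA aB aCD aE aF : ℝ) : ℝ :=
  p1 aA aB aCD aE aF + p2 aA aB aCD aE aF + p3 aA aB aCD aE aF +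
    p4 aA aB aCD aE aF + p5 aA aB aCD aE aF + p6 aA aB aCD aE aF +
    p7 aA aB aCD aE aF + p8 aA aB aCD aE aF + p9 aA aB aCD aE aF

/-- γᵐ_E : probability that receiver E receives a probe. -/
noncomputable def gammaME (aA aB aCD aE aF : ℝ) : ℝ :=
  p1 aA aB aCD aE aF + p2 aA aB aCD aE aF + p3 aA aB aCD aE aF +
    p7 aA aB aCD aE aF + p8 aA aB aCD aE aF + p9 aA aB aCD aE aF

/-- γᵐ_F : probability that receiver F receives a probe. -/
noncomputable def gammaMF (aA aB aCD aE aF : ℝ) : ℝ :=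
  p4 aA aB aCD aE aF + p5 aA aB aCD aE aF + p6 aA aB aCD aE aF +
    p7 aA aB aCD aE aF + p8 aA aB aCD aE aF + p9 aA aB aCD aE aF

/-- γᵐ_D = γʳ_C. -/
noncomputable def gammaMD (aA aB aCD aE aF : ℝ) : ℝ := gammaRC aA aB aCD aE aF

/-!
Every observation passes through the middle link, and given that it works the events at the
sources and at the receivers are independent, so each γ factorises as `a_CD` times a source
factor times a receiver factor. Writing `S = 1 - ā_A ā_B` and `T = 1 - ā_E ā_F` for the
probabilities that some source, resp. some receiver, link works, inclusion–exclusion gives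
`γʳ_A + γʳ_B − γʳ_C = a_CD a_A a_B T` and `γᵐ_E + γᵐ_F − γᵐ_D = a_CD S a_E a_F`, and both
sides of the identity become `a_CD⁴ S² T² a_A a_B a_E a_F`.
-/

def probEither (a b : ℝ) : ℝ := 1 - (1 - a) * (1 - b)

theorem probEither_pos {a b : ℝ} (ha : 0 < a) (ha1 : a ≤ 1) (hb : 0 ≤ b) :
    0 < probEither a b := by
  have : 0 ≤ b * (1 - a) := mul_nonneg hb (sub_nonneg.2 ha1)
  unfold probEither
  linarith

section ClosedForms

variable (aA aB aCD aE aF : ℝ)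

theorem gammaMD_eq : gammaMD aA aB aCD aE aF = aCD * probEither aA aB * probEither aE aF := by
  unfold gammaMD gammaRC p1 p2 p3 p4 p5 p6 p7 p8 p9 probEither; ring

theorem gammaRA_eq : gammaRA aA aB aCD aE aF = aCD * aA * probEither aE aF := by
  unfold gammaRA p1 p3 p4 p6 p7 p9 probEither; ring

theorem gammaRB_eq : gammaRB aA aB aCD aE aF = aCD * aB * probEither aE aF := by
  unfold gammaRB p2 p3 p5 p6 p8 p9 probEither; ring

theorem gammaME_eq : gammaME aA aB aCD aE aF = aCD * probEither aA aB * aE := by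
  unfold gammaME p1 p2 p3 p7 p8 p9 probEither; ring

theorem gammaMF_eq : gammaMF aA aB aCD aE aF = aCD * probEither aA aB * aF := by
  unfold gammaMF p4 p5 p6 p7 p8 p9 probEither; ring

theorem gammaRA_add_gammaRB_sub_gammaRC :
    gammaRA aA aB aCD aE aF + gammaRB aA aB aCD aE aF - gammaRC aA aB aCD aE aF =
      aCD * (aA * aB) * probEither aE aF := by
  rw [gammaRA_eq, gammaRB_eq, ← gammaMD, gammaMD_eq]; unfold probEither; ring

theorem gammaME_add_gammaMF_sub_gammaMD :
    gammaME aA aB aCD aE aF + gammaMF aA aB aCD aE aF - gammaMD aA aB aCD aE aF =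
      aCD * probEither aA aB * (aE * aF) := by
  rw [gammaME_eq, gammaMF_eq, gammaMD_eq]; unfold probEither; ring

end ClosedForms

/-- The exact inversion underlying the MLE
`α̂_CD = γʳ_A γʳ_B γᵐ_E γᵐ_F / [γᵐ_D (γʳ_A+γʳ_B−γʳ_C)(γᵐ_E+γᵐ_F−γᵐ_D)]`
of the middle-link success rate. -/
theorem mle_inversion_middle_link
    (aA aB aCD aE aF : ℝ)
    (hA : aA ∈ Set.Ioc (0:ℝ) 1) (hB : aB ∈ Set.Ioc (0:ℝ) 1)
    (hCD : aCD ∈ Set.Ioc (0:ℝ) 1) (hE : aE ∈ Set.Ioc (0:ℝ) 1)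
    (hF : aF ∈ Set.Ioc (0:ℝ) 1) :
    0 < gammaMD aA aB aCD aE aF ∧
    0 < gammaRA aA aB aCD aE aF + gammaRB aA aB aCD aE aF - gammaRC aA aB aCD aE aF ∧
    0 < gammaME aA aB aCD aE aF + gammaMF aA aB aCD aE aF - gammaMD aA aB aCD aE aF ∧
    aCD * gammaMD aA aB aCD aE aF *
        (gammaRA aA aB aCD aE aF + gammaRB aA aB aCD aE aF - gammaRC aA aB aCD aE aF) *
        (gammaME aA aB aCD aE aF + gammaMF aA aB aCD aE aF - gammaMD aA aB aCD aE aF) =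
      gammaRA aA aB aCD aE aF * gammaRB aA aB aCD aE aF *
        gammaME aA aB aCD aE aF * gammaMF aA aB aCD aE aF := by
  obtain ⟨hA0, hA1⟩ := hA
  obtain ⟨hB0, -⟩ := hB
  obtain ⟨hCD0, -⟩ := hCD
  obtain ⟨hE0, hE1⟩ := hE
  obtain ⟨hF0, -⟩ := hF
  have hS := probEither_pos hA0 hA1 hB0.le
  have hT := probEither_pos hE0 hE1 hF0.le
  rw [gammaRA_add_gammaRB_sub_gammaRC, gammaME_add_gammaMF_sub_gammaMD, gammaMD_eq,
    gammaRA_eq, gammaRB_eq, gammaME_eq, gammaMF_eq]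
  exact ⟨by positivity, by positivity, by positivity, by ring⟩
end

section
/- Let R be a nontrivial commutative ring that is an integral domain, σ a type, and S : Fin n → Finset σ a family of edge sets such that for all k ≠ k', S k' is not a subset of S k; put P_k = ∏_{e ∈ S k} X_e. Then the polynomial f = ∏_{T ≠ T'} (Σ_{k ∈ T} P_k − Σ_{k ∈ T'} P_k), where the product ranges over all ordered pairs of distinct subsets T, T' of Fin n, is not the zero polynomial in the multivariate polynomial ring over R with variables indexed by σ. -/
/-!
Distinct edge sets give distinct path monomials, since the exponent vector of `∏ e ∈ s, X e`
is the indicator of `s`. A sum of distinct monomials over `T` has coefficient `1` at the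
monomial of each `k ∈ T` and `0` at the monomial of each `k ∉ T`, so it determines `T`. Hence
all `2^n` probe polynomials are pairwise distinct, every factor of the grand polynomial is
nonzero, and their product is nonzero because `MvPolynomial σ R` is a domain.
-/

open MvPolynomial

namespace MvPolynomial

variable {R σ ι : Type*}

theorem prod_X_eq_monomial [CommSemiring R] (s : Finset σ) :
    ∏ e ∈ s, (X e : MvPolynomial σ R) = monomial (∑ e ∈ s, Finsupp.single e 1) 1 :=
  (monomial_sum_one s _).symm

theorem sum_single_one_injective :
    Function.Injective fun s : Finset σ => ∑ e ∈ s, Finsupp.single e (1 : ℕ) := by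
  intro s t h
  have := congrArg Finsupp.toMultiset h
  simp only [Finsupp.toMultiset_sum_single, one_nsmul] at this
  exact Finset.val_inj.mp this

theorem coeff_sum_monomial_one [CommSemiring R] [DecidableEq ι] {d : ι → σ →₀ ℕ}
    (hd : Function.Injective d) (T : Finset ι) (k : ι) :
    coeff (d k) (∑ j ∈ T, monomial (d j) (1 : R)) = if k ∈ T then 1 else 0 := by
  classical
  simp only [coeff_sum, coeff_monomial, hd.eq_iff]
  exact Finset.sum_ite_eq' T k fun _ => 1

theorem sum_monomial_one_injective [CommSemiring R] [Nontrivial R] {d : ι → σ →₀ ℕ}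
    (hd : Function.Injective d) :
    Function.Injective fun T : Finset ι => ∑ j ∈ T, monomial (d j) (1 : R) := by
  classical
  intro T T' h
  ext k
  have hk := congrArg (coeff (d k)) h
  simp only [coeff_sum_monomial_one hd] at hk
  by_cases hT : k ∈ T <;> by_cases hT' : k ∈ T' <;> simp_all

theorem sum_prod_X_injective [CommSemiring R] [Nontrivial R] {S : ι → Finset σ}
    (hS : Function.Injective S) :
    Function.Injective fun T : Finset ι => ∑ k ∈ T, ∏ e ∈ S k, (X e : MvPolynomial σ R) := by
  simp only [prod_X_eq_monomial]
  exact sum_monomial_one_injective (sum_single_one_injective.comp hS)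

end MvPolynomial

/-- The "grand" identifiability polynomial — the product over all ordered pairs
of distinct subsets `T, T'` of paths of the differences of the corresponding
probe polynomials — is not identically zero, provided the paths' edge sets form
an antichain under inclusion. -/
theorem grand_identifiability_polynomial_ne_zero
    (R : Type*) [CommRing R] [IsDomain R] (σ : Type*) (n : ℕ)
    (S : Fin n → Finset σ)
    (hS : ∀ k k' : Fin n, k ≠ k' → ¬ S k' ⊆ S k) :
    (∏ TT' ∈ (Finset.univ : Finset (Finset (Fin n) × Finset (Fin n))).filter
        (fun p => p.1 ≠ p.2),
      ((∑ k ∈ TT'.1, ∏ e ∈ S k, (MvPolynomial.X e : MvPolynomial σ R)) -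
        ∑ k ∈ TT'.2, ∏ e ∈ S k, (MvPolynomial.X e : MvPolynomial σ R))) ≠ 0 := by
  have hS_inj : Function.Injective S := fun k k' h => by
    by_contra hne
    exact hS k k' hne h.symm.subset
  refine Finset.prod_ne_zero_iff.mpr fun TT' hTT' => sub_ne_zero.mpr ?_
  exact (sum_prod_X_injective hS_inj).ne (Finset.mem_filter.mp hTT').2
end
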